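/- The generating function of the Witten indices of ladders over even cycles of length 2 satisfies: ∑_{m≥0} Z(Pₘ × C₂) t^m = −(t−1)/(t²+1); equivalently the sequence Z(Pₘ × C₂) for m = 0,1,2,3,… is periodic with period 4, taking values 1, −1, −1, 1 repeatedly. -/

import Mathlib

open scoped Classical

noncomputable section

/-- The Witten index `Z = 1 - χ(Ind(R))` of the independence complex of the relation `R`. -/
def zRel {V : Type*} [Fintype V] (R : V → V → Prop) : ℤ :=
  1 - ∑ s ∈ Finset.univ.filter
      (fun s : Finset V => s.Nonempty ∧ ∀ u ∈ s, ∀ w ∈ s, ¬ R u w),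
    (-1 : ℤ) ^ (s.card - 1)

/-- The grid graph `Pₘ × Pₙ` on `Fin m × Fin n` (edges between vertices at distance 1);
by the convention `C₂ = P₂`, the ladder `Pₘ × C₂` is `Pₘ × P₂ = gridPP m 2`. -/
def gridPP (m n : ℕ) : Fin m × Fin n → Fin m × Fin n → Prop :=
  fun a b =>
    (a.1 = b.1 ∧ (a.2.val + 1 = b.2.val ∨ b.2.val + 1 = a.2.val)) ∨
    (a.2 = b.2 ∧ (a.1.val + 1 = b.1.val ∨ b.1.val + 1 = a.1.val))

/-!
`zRel R` is the signed count `∑ (-1)^|I|` of the independent sets `I` of `R`, the empty set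
included. An independent set of the ladder `Pₘ × P₂` meets each rung in at most one vertex, so it
is a word of length `m` in the column states `none`, `some 0`, `some 1` in which consecutive
letters never occupy the same row, and `Z(Pₘ × P₂)` is a transfer-matrix sum over such words.
The transfer matrix squares to minus the swap of the two rows, hence
`Z(Pₘ₊₂ × P₂) = -Z(Pₘ × P₂)`; together with `Z = 1, -1` for `m = 0, 1` this gives both the
period `1, -1, -1, 1` and `(1 + t²) ∑ Z(Pₘ × P₂) tᵐ = 1 - t`.
-/

lemma zRel_eq_sum_indep {V : Type*} [Fintype V] (R : V → V → Prop) :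
    zRel R = ∑ s : Finset V with ∀ u ∈ s, ∀ w ∈ s, ¬ R u w, (-1 : ℤ) ^ s.card := by
  have hempty : ∅ ∈ ({s : Finset V | ∀ u ∈ s, ∀ w ∈ s, ¬ R u w} : Finset _) := by simp
  have herase : ({s : Finset V | ∀ u ∈ s, ∀ w ∈ s, ¬ R u w} : Finset _).erase ∅ =
      ({s : Finset V | s.Nonempty ∧ ∀ u ∈ s, ∀ w ∈ s, ¬ R u w} : Finset _) := by
    ext s
    simp [Finset.nonempty_iff_ne_empty]
  rw [← Finset.add_sum_erase _ _ hempty, herase, zRel, Finset.card_empty, pow_zero,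
    sub_eq_add_neg, ← Finset.sum_neg_distrib]
  refine congrArg _ (Finset.sum_congr rfl fun s hs => ?_)
  obtain ⟨n, hn⟩ := Nat.exists_eq_succ_of_ne_zero (Finset.mem_filter.1 hs).2.1.card_pos.ne'
  rw [hn, pow_succ]
  simp

section Transfer

variable {S M : Type*} [Fintype S] [CommSemiring M] (R : S → S → Prop) (w : S → M)

def chainSum (n : ℕ) (x : S) : M :=
  ∑ f : Fin n → S with (x :: List.ofFn f).IsChain R, ∏ i, w (f i)

@[simp]
lemma chainSum_zero (x : S) : chainSum R w 0 x = 1 := by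
  simp [chainSum, Finset.filter_true_of_mem, Finset.univ_unique]

lemma chainSum_succ (n : ℕ) (x : S) :
    chainSum R w (n + 1) x = ∑ y with R x y, w y * chainSum R w n y := by
  rw [chainSum, Finset.sum_filter, ← (Fin.consEquiv fun _ => S).sum_comp, Fintype.sum_prod_type]
  simp [Fin.consEquiv, List.ofFn_succ, List.isChain_cons_cons, Fin.prod_univ_succ, chainSum,
    Finset.sum_filter, ite_and, Finset.mul_sum]

end Transfer

section Ladder

def ladderCompat (x y : Option (Fin 2)) : Prop := ∀ k ∈ x, k ∉ y

def ladderWeight (x : Option (Fin 2)) : ℤ := (-1) ^ x.toFinset.card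

def ladderSet {m : ℕ} (f : Fin m → Option (Fin 2)) : Finset (Fin m × Fin 2) :=
  {p | p.2 ∈ f p.1}

variable {m : ℕ}

lemma prod_ladderWeight (f : Fin m → Option (Fin 2)) :
    ∏ i, ladderWeight (f i) = (-1) ^ (ladderSet f).card := by
  have hcard : (ladderSet f).card = ∑ i, (f i).toFinset.card := by
    rw [ladderSet, Finset.card_filter, Fintype.sum_prod_type]
    refine Finset.sum_congr rfl fun i _ => ?_
    rw [← Finset.card_filter]
    congr 1
    ext k
    simp
  rw [hcard, ← Finset.prod_pow_eq_pow_sum]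
  rfl

lemma ladderSet_injective : Function.Injective (ladderSet (m := m)) := by
  intro f g h
  funext i
  refine Option.ext fun k => ?_
  simpa [ladderSet] using congrArg (((i, k) : Fin m × Fin 2) ∈ ·) h

lemma isIndep_ladderSet_iff (f : Fin m → Option (Fin 2)) :
    (∀ u ∈ ladderSet f, ∀ v ∈ ladderSet f, ¬ gridPP m 2 u v) ↔
      (List.ofFn f).IsChain ladderCompat := by
  simp only [List.isChain_ofFn, ladderSet, ladderCompat, Finset.mem_filter, Finset.mem_univ,
    true_and]
  constructor
  · intro h i hi k hk hk'
    exact h (_, k) hk (_, k) hk' (Or.inr ⟨rfl, Or.inl rfl⟩)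
  · rintro h ⟨⟨i, hi⟩, k⟩ hu ⟨⟨j, hj⟩, l⟩ hv huv
    dsimp only at hu hv huv
    rcases huv with ⟨hij, hkl⟩ | ⟨hkl, hij | hij⟩
    · obtain rfl : i = j := congrArg Fin.val hij
      obtain rfl := Option.mem_unique hu hv
      omega
    · obtain ⟨rfl, rfl⟩ : k = l ∧ i + 1 = j := ⟨hkl, hij⟩
      exact h i hj k hu hv
    · obtain ⟨rfl, rfl⟩ : k = l ∧ j + 1 = i := ⟨hkl, hij⟩
      exact h j hi k hv hu

lemma exists_ladderSet_eq {s : Finset (Fin m × Fin 2)}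
    (hs : ∀ u ∈ s, ∀ v ∈ s, ¬ gridPP m 2 u v) : ∃ f, ladderSet f = s := by
  have hcol : ∀ i, ∃ x : Option (Fin 2), ∀ k, k ∈ x ↔ (i, k) ∈ s := by
    intro i
    have hrung : (i, 0) ∈ s → (i, 1) ∉ s := fun h0 h1 => hs _ h0 _ h1 (Or.inl ⟨rfl, Or.inl rfl⟩)
    by_cases h0 : (i, 0) ∈ s
    · exact ⟨some 0, fun k => by fin_cases k <;> simp [h0, hrung h0]⟩
    by_cases h1 : (i, 1) ∈ s
    · exact ⟨some 1, fun k => by fin_cases k <;> simp [h0, h1]⟩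
    · exact ⟨none, fun k => by fin_cases k <;> simp [h0, h1]⟩
  choose f hf using hcol
  exact ⟨f, by ext ⟨i, k⟩; simp [ladderSet, hf]⟩

end Ladder

local notation "ladderSum" => chainSum ladderCompat ladderWeight

lemma zRel_gridPP_two_eq_ladderSum (m : ℕ) :
    zRel (gridPP m 2) = ladderSum m none := by
  have hnone : ∀ l, (none :: l).IsChain ladderCompat ↔ l.IsChain ladderCompat := by
    simp [List.isChain_cons, ladderCompat]
  rw [zRel_eq_sum_indep, chainSum]
  symm
  refine Finset.sum_nbij ladderSet ?_ ladderSet_injective.injOn ?_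
    fun f _ => prod_ladderWeight f
  · intro f hf
    simp only [Finset.mem_filter, Finset.mem_univ, true_and, hnone] at hf ⊢
    exact (isIndep_ladderSet_iff f).2 hf
  · intro s hs
    simp only [Finset.mem_coe, Finset.mem_filter, Finset.mem_univ, true_and] at hs
    obtain ⟨f, rfl⟩ := exists_ladderSet_eq hs
    refine ⟨f, ?_, rfl⟩
    simpa only [Finset.mem_coe, Finset.mem_filter, Finset.mem_univ, true_and, hnone]
      using (isIndep_ladderSet_iff f).1 hs

lemma ladderSum_succ_none (n : ℕ) :
    ladderSum (n + 1) none = ladderSum n none - ladderSum n (some 0) - ladderSum n (some 1) := by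
  simp [chainSum_succ, Fintype.sum_option, ladderCompat, ladderWeight]
  ring

lemma ladderSum_succ_some_zero (n : ℕ) :
    ladderSum (n + 1) (some 0) = ladderSum n none - ladderSum n (some 1) := by
  simp [chainSum_succ, Finset.sum_filter, Fintype.sum_option, ladderCompat, ladderWeight]
  ring

lemma ladderSum_succ_some_one (n : ℕ) :
    ladderSum (n + 1) (some 1) = ladderSum n none - ladderSum n (some 0) := by
  simp [chainSum_succ, Finset.sum_filter, Fintype.sum_option, ladderCompat, ladderWeight]
  ring

lemma zRel_gridPP_add_two (m : ℕ) : zRel (gridPP (m + 2) 2) = -zRel (gridPP m 2) := by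
  simp only [zRel_gridPP_two_eq_ladderSum, ladderSum_succ_none, ladderSum_succ_some_zero,
    ladderSum_succ_some_one]
  ring

lemma zRel_gridPP_zero_two : zRel (gridPP 0 2) = 1 := by
  simp [zRel_gridPP_two_eq_ladderSum]

lemma zRel_gridPP_one_two : zRel (gridPP 1 2) = -1 := by
  simp [zRel_gridPP_two_eq_ladderSum, ladderSum_succ_none]

lemma PowerSeries.mk_mul_X_sq_add_one {R : Type*} [Ring R] {a : ℕ → R}
    (h : ∀ n, a (n + 2) = -a n) :
    PowerSeries.mk a * (PowerSeries.X ^ 2 + 1) =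
      PowerSeries.C (a 0) + PowerSeries.C (a 1) * PowerSeries.X := by
  ext (_ | _ | n) <;> simp [mul_add, PowerSeries.coeff_mul_X_pow', h]

theorem stmt_13 :
    (PowerSeries.mk fun m : ℕ => zRel (gridPP m 2)) * (PowerSeries.X ^ 2 + 1) =
      1 - PowerSeries.X ∧
    ∀ m : ℕ, zRel (gridPP m 2) =
      if m % 4 = 0 then 1 else if m % 4 = 1 then -1 else if m % 4 = 2 then -1 else 1 := by
  refine ⟨?_, fun m => ?_⟩
  · rw [PowerSeries.mk_mul_X_sq_add_one zRel_gridPP_add_two, zRel_gridPP_zero_two,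
      zRel_gridPP_one_two]
    simp [sub_eq_add_neg]
  · induction m using Nat.twoStepInduction with
    | zero => simp [zRel_gridPP_zero_two]
    | one => simp [zRel_gridPP_one_two]
    | more n ih _ =>
      rw [zRel_gridPP_add_two, ih]
      split_ifs <;> omega
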